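/- arXiv:2209.09948 — 2 statements merged into one kernel-verified Lean document; each statement's English description precedes it below -/
import Mathlib

section
/- Let t ≥ 2 with t ≤ n, and let g₁ = ∏_{i∈σ₁}xᵢ·∏_{i∈τ₁}(1−xᵢ) and g₂ = ∏_{i∈σ₂}xᵢ·∏_{i∈τ₂}(1−xᵢ) be pseudomonomials with σ₁, τ₁, σ₂, τ₂ ⊆ {t+1,…,n}, such that g₁ and g₂ share no index. Let J be the ideal of R generated by x₁⋯x_t·g₁ and (1−x₁)⋯(1−x_t)·g₂. Then CF(J) = {x₁⋯x_t·g₁, (1−x₁)⋯(1−x_t)·g₂}; that is, this presentation of J is in canonical form. -/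
open MvPolynomial

/-- The pseudomonomial `∏_{i∈σ} xᵢ · ∏_{i∈τ} (1 - xᵢ)` in `F₂[x₁,…,xₙ]`. -/
noncomputable def psm (n : ℕ) (σ τ : Finset (Fin n)) : MvPolynomial (Fin n) (ZMod 2) :=
  (∏ i ∈ σ, X i) * ∏ i ∈ τ, (1 - X i)

lemma eval_psm {n : ℕ} (σ τ S : Finset (Fin n)) :
    eval (fun i => if i ∈ S then (1 : ZMod 2) else 0) (psm n σ τ) =
      if σ ⊆ S ∧ ∀ i ∈ τ, i ∉ S then 1 else 0 := by
  rw [psm, map_mul, map_prod, map_prod]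
  simp only [eval_X, map_sub, map_one]
  split_ifs with h
  · rw [Finset.prod_eq_one fun i hi => by simp [h.1 hi],
      Finset.prod_eq_one fun i hi => by simp [h.2 i hi], mul_one]
  · rw [not_and_or] at h
    rcases h with h | h
    · rw [Finset.not_subset] at h
      obtain ⟨i, hi, hiS⟩ := h
      rw [Finset.prod_eq_zero hi (by simp [hiS]), zero_mul]
    · push_neg at h
      obtain ⟨i, hi, hiS⟩ := h
      rw [Finset.prod_eq_zero hi (by simp [hiS]), mul_zero]

lemma psm_dvd {n : ℕ} {σ' τ' σ τ : Finset (Fin n)} (h1 : σ' ⊆ σ) (h2 : τ' ⊆ τ) :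
    psm n σ' τ' ∣ psm n σ τ :=
  ⟨psm n (σ \ σ') (τ \ τ'), by
    rw [psm, psm, psm, ← Finset.prod_sdiff h1, ← Finset.prod_sdiff h2]; ring⟩

lemma span_eval_zero {n : ℕ} {f a b : MvPolynomial (Fin n) (ZMod 2)} {p : Fin n → ZMod 2}
    (hmem : f ∈ Ideal.span {a, b}) (ha : eval p a = 0) (hb : eval p b = 0) :
    eval p f = 0 := by
  obtain ⟨u, v, huv⟩ := Ideal.mem_span_pair.mp hmem
  rw [← huv, map_add, map_mul, map_mul, ha, hb, mul_zero, mul_zero, add_zero]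

lemma psm_inj {n : ℕ} {σ τ σ' τ' : Finset (Fin n)} (hd : Disjoint σ τ) (hd' : Disjoint σ' τ')
    (h1 : psm n σ τ ∣ psm n σ' τ') (h2 : psm n σ' τ' ∣ psm n σ τ) :
    psm n σ τ = psm n σ' τ' := by
  have key : ∀ S : Finset (Fin n),
      (σ ⊆ S ∧ ∀ i ∈ τ, i ∉ S) ↔ (σ' ⊆ S ∧ ∀ i ∈ τ', i ∉ S) := by
    intro S
    constructor
    · intro h
      by_contra hc
      obtain ⟨c, hc'⟩ := h2
      have := congrArg (eval (fun i => if i ∈ S then (1 : ZMod 2) else 0)) hc'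
      rw [map_mul, eval_psm, eval_psm, if_pos h, if_neg hc, zero_mul] at this
      exact one_ne_zero this
    · intro h
      by_contra hc
      obtain ⟨c, hc'⟩ := h1
      have := congrArg (eval (fun i => if i ∈ S then (1 : ZMod 2) else 0)) hc'
      rw [map_mul, eval_psm, eval_psm, if_pos h, if_neg hc, zero_mul] at this
      exact one_ne_zero this
  have h1' := (key σ).mp ⟨subset_rfl, fun i hi => Finset.disjoint_right.mp hd hi⟩
  have h2' := (key σ').mpr ⟨subset_rfl, fun i hi => Finset.disjoint_right.mp hd' hi⟩
  have hσ : σ = σ' := Finset.Subset.antisymm h2'.1 h1'.1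
  have hτ : τ = τ' := by
    ext i
    constructor
    · intro hi
      by_contra hi'
      have hc := (key (σ ∪ {i})).mpr
        ⟨hσ ▸ Finset.subset_union_left, fun l hl => by
          simp only [Finset.mem_union, Finset.mem_singleton]
          rintro (h | rfl)
          · exact Finset.disjoint_right.mp hd' hl (hσ ▸ h)
          · exact hi' hl⟩
      exact hc.2 i hi (by simp)
    · intro hi
      by_contra hi'
      have hc := (key (σ ∪ {i})).mp
        ⟨Finset.subset_union_left, fun l hl => by
          simp only [Finset.mem_union, Finset.mem_singleton]
          rintro (h | rfl)
          · exact Finset.disjoint_right.mp hd hl h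
          · exact hi' hl⟩
      exact hc.2 i hi (by simp)
  rw [hσ, hτ]

lemma main_dvd {n : ℕ} (L σ₁ τ₁ σ₂ τ₂ : Finset (Fin n))
    (hL2 : ∀ j : Fin n, ∃ j' ∈ L, j' ≠ j)
    (hshare : ∀ i : Fin n, i ∉ (σ₁ ∩ τ₂) ∪ (σ₂ ∩ τ₁))
    (σ τ : Finset (Fin n)) (hd : Disjoint σ τ)
    (hmem : psm n σ τ ∈ Ideal.span {psm n (L ∪ σ₁) τ₁, psm n σ₂ (L ∪ τ₂)}) :
    psm n (L ∪ σ₁) τ₁ ∣ psm n σ τ ∨ psm n σ₂ (L ∪ τ₂) ∣ psm n σ τ := by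
  have hτσ : ∀ i ∈ τ, i ∉ σ := fun i hi => Finset.disjoint_right.mp hd hi
  have contra : ∀ S : Finset (Fin n), σ ⊆ S → (∀ i ∈ τ, i ∉ S) →
      ¬(L ∪ σ₁ ⊆ S ∧ ∀ i ∈ τ₁, i ∉ S) → ¬(σ₂ ⊆ S ∧ ∀ i ∈ L ∪ τ₂, i ∉ S) → False := by
    intro S h1 h2 h3 h4
    have h0 := span_eval_zero (p := fun i => if i ∈ S then (1 : ZMod 2) else 0) hmem
      (by rw [eval_psm, if_neg h3]) (by rw [eval_psm, if_neg h4])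
    rw [eval_psm, if_pos ⟨h1, h2⟩] at h0
    exact one_ne_zero h0
  by_contra hcon
  push_neg at hcon
  obtain ⟨hn1, hn2⟩ := hcon
  have w1 : (∃ j ∈ L ∪ σ₁, j ∉ σ) ∨ ∃ j ∈ τ₁, j ∉ τ := by
    by_contra hw
    push_neg at hw
    exact hn1 (psm_dvd (fun j hj => hw.1 j hj) (fun j hj => hw.2 j hj))
  have w2 : (∃ k ∈ σ₂, k ∉ σ) ∨ ∃ k ∈ L ∪ τ₂, k ∉ τ := by
    by_contra hw
    push_neg at hw
    exact hn2 (psm_dvd (fun j hj => hw.1 j hj) (fun j hj => hw.2 j hj))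
  rcases w1 with ⟨j, hj, hjσ⟩ | ⟨j, hj, hjτ⟩ <;> rcases w2 with ⟨k, hk, hkσ⟩ | ⟨k, hk, hkτ⟩
  · exact contra σ subset_rfl hτσ (fun h => hjσ (h.1 hj)) (fun h => hkσ (h.1 hk))
  · by_cases hjk : j = k
    · subst hjk
      by_cases hjL : j ∈ L
      · obtain ⟨j', hj'L, hj'ne⟩ := hL2 j
        by_cases hj'σ : j' ∈ σ
        · exact contra σ subset_rfl hτσ (fun h => hjσ (h.1 hj))
            (fun h => h.2 j' (Finset.mem_union_left _ hj'L) hj'σ)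
        · refine contra (σ ∪ {j}) Finset.subset_union_left
            (fun i hi => by
              simp only [Finset.mem_union, Finset.mem_singleton]
              rintro (h | rfl)
              · exact hτσ i hi h
              · exact hkτ hi)
            (fun h => ?_)
            (fun h => h.2 j hk (by simp))
          rcases Finset.mem_union.mp (h.1 (Finset.mem_union_left _ hj'L)) with h' | h'
          · exact hj'σ h'
          · exact hj'ne (Finset.mem_singleton.mp h')
      · have hjσ₁ : j ∈ σ₁ := (Finset.mem_union.mp hj).resolve_left hjL
        have hjτ₂ : j ∈ τ₂ := (Finset.mem_union.mp hk).resolve_left hjL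
        exact hshare j (Finset.mem_union_left _ (Finset.mem_inter.mpr ⟨hjσ₁, hjτ₂⟩))
    · refine contra (σ ∪ {k}) Finset.subset_union_left
        (fun i hi => by
          simp only [Finset.mem_union, Finset.mem_singleton]
          rintro (h | rfl)
          · exact hτσ i hi h
          · exact hkτ hi)
        (fun h => ?_) (fun h => h.2 k hk (by simp))
      rcases Finset.mem_union.mp (h.1 hj) with h' | h'
      · exact hjσ h'
      · exact hjk (Finset.mem_singleton.mp h')
  · have hjk : j ≠ k := by
      rintro rfl
      exact hshare j (Finset.mem_union_right _ (Finset.mem_inter.mpr ⟨hk, hj⟩))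
    refine contra (σ ∪ {j}) Finset.subset_union_left
      (fun i hi => by
        simp only [Finset.mem_union, Finset.mem_singleton]
        rintro (h | rfl)
        · exact hτσ i hi h
        · exact hjτ hi)
      (fun h => h.2 j hj (by simp))
      (fun h => ?_)
    rcases Finset.mem_union.mp (h.1 hk) with h' | h'
    · exact hkσ h'
    · exact hjk (Finset.mem_singleton.mp h').symm
  · refine contra (σ ∪ {j, k}) Finset.subset_union_left
      (fun i hi => by
        simp only [Finset.mem_union, Finset.mem_insert, Finset.mem_singleton]
        rintro (h | rfl | rfl)
        · exact hτσ i hi h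
        · exact hjτ hi
        · exact hkτ hi)
      (fun h => h.2 j hj (by simp))
      (fun h => h.2 k hk (by simp))

/-- A polynomial of `F₂[x₁,…,xₙ]` is a pseudomonomial if it has the form
`∏_{i∈σ} xᵢ · ∏_{i∈τ} (1 - xᵢ)` for disjoint `σ τ`. -/
def IsPseudomonomial {n : ℕ} (f : MvPolynomial (Fin n) (ZMod 2)) : Prop :=
  ∃ σ τ : Finset (Fin n), Disjoint σ τ ∧ f = psm n σ τ

/-- The canonical form of an ideal `J`: the set of minimal pseudomonomials of `J`,
i.e. pseudomonomials `f ∈ J` such that no pseudomonomial `g ≠ f` dividing `f` lies in `J`. -/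
def CF {n : ℕ} (J : Ideal (MvPolynomial (Fin n) (ZMod 2))) :
    Set (MvPolynomial (Fin n) (ZMod 2)) :=
  {f | IsPseudomonomial f ∧ f ∈ J ∧
    ∀ g : MvPolynomial (Fin n) (ZMod 2), IsPseudomonomial g → g ∣ f → g ≠ f → g ∉ J}
set_option maxHeartbeats 2000000 in
/-- Theorem 5.2(2): the ideal `(x₁⋯x_t g₁, (1-x₁)⋯(1-x_t) g₂)` with `t ≥ 2` and `g₁, g₂`
supported on indices `> t` and sharing no index is in canonical form. -/
theorem stmt3 {n t : ℕ} (hn : 0 < n) (ht : 2 ≤ t) (htn : t ≤ n)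
    (σ₁ τ₁ σ₂ τ₂ : Finset (Fin n))
    (hd1 : Disjoint σ₁ τ₁) (hd2 : Disjoint σ₂ τ₂)
    (hhigh : ∀ i ∈ σ₁ ∪ τ₁ ∪ σ₂ ∪ τ₂, t ≤ (i : ℕ))
    (hshare : ∀ i : Fin n, i ∉ (σ₁ ∩ τ₂) ∪ (σ₂ ∩ τ₁)) :
    CF (Ideal.span
        {(∏ i ∈ Finset.univ.filter (fun i : Fin n => (i : ℕ) < t), X i) * psm n σ₁ τ₁,
         (∏ i ∈ Finset.univ.filter (fun i : Fin n => (i : ℕ) < t), (1 - X i)) * psm n σ₂ τ₂}) =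
      {(∏ i ∈ Finset.univ.filter (fun i : Fin n => (i : ℕ) < t), X i) * psm n σ₁ τ₁,
       (∏ i ∈ Finset.univ.filter (fun i : Fin n => (i : ℕ) < t), (1 - X i)) * psm n σ₂ τ₂} := by
  set L : Finset (Fin n) := Finset.univ.filter (fun i : Fin n => (i : ℕ) < t) with hLdef
  have hmemL : ∀ i : Fin n, i ∈ L ↔ (i : ℕ) < t := by
    intro i; simp [hLdef]
  -- two distinct small elements
  clear_value L
  have h1n : 1 < n := lt_of_lt_of_le (by omega) htn
  have hi0 : (⟨0, hn⟩ : Fin n) ∈ L := (hmemL _).mpr (by simpa using by omega)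
  have hi1 : (⟨1, h1n⟩ : Fin n) ∈ L := (hmemL _).mpr (by simpa using by omega)
  have hL2 : ∀ j : Fin n, ∃ j' ∈ L, j' ≠ j := by
    intro j
    by_cases h : j = ⟨0, hn⟩
    · exact ⟨⟨1, h1n⟩, hi1, by subst h; simp [Fin.ext_iff]⟩
    · exact ⟨⟨0, hn⟩, hi0, fun he => h he.symm⟩
  have hdis : ∀ {s : Finset (Fin n)}, (∀ i ∈ s, t ≤ (i : ℕ)) → Disjoint L s := by
    intro s hs
    rw [Finset.disjoint_left]
    intro i hiL his
    have h1 := hs i his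
    have h2 := (hmemL i).mp hiL
    omega
  have hdL1 : Disjoint L σ₁ := hdis fun i hi => hhigh i (by simp [hi])
  have hdLτ₁ : Disjoint L τ₁ := hdis fun i hi => hhigh i (by simp [hi])
  have hdLσ₂ : Disjoint L σ₂ := hdis fun i hi => hhigh i (by simp [hi])
  have hdLτ₂ : Disjoint L τ₂ := hdis fun i hi => hhigh i (by simp [hi])
  have d1 : Disjoint (L ∪ σ₁) τ₁ := Finset.disjoint_union_left.mpr ⟨hdLτ₁, hd1⟩
  have d2 : Disjoint σ₂ (L ∪ τ₂) := Finset.disjoint_union_right.mpr ⟨hdLσ₂.symm, hd2⟩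
  have hf1 : (∏ i ∈ L, X i) * psm n σ₁ τ₁ = psm n (L ∪ σ₁) τ₁ := by
    rw [psm, psm, Finset.prod_union hdL1]; ring
  have hf2 : (∏ i ∈ L, (1 - X i)) * psm n σ₂ τ₂ = psm n σ₂ (L ∪ τ₂) := by
    rw [psm, psm, Finset.prod_union hdLτ₂]; ring
  have hi0σ₂ : (⟨0, hn⟩ : Fin n) ∉ σ₂ := fun h => by
    have h2 := hhigh _ (Finset.mem_union_left _ (Finset.mem_union_right _ h))
    simp only [Fin.val_mk] at h2
    omega
  have hnd21 : ¬ psm n σ₂ (L ∪ τ₂) ∣ psm n (L ∪ σ₁) τ₁ := by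
    rintro ⟨c, hc⟩
    have h := congrArg (eval (fun i => if i ∈ L ∪ σ₁ then (1 : ZMod 2) else 0)) hc
    rw [map_mul, eval_psm, eval_psm,
      if_pos ⟨subset_rfl, fun i hi => Finset.disjoint_right.mp d1 hi⟩,
      if_neg (fun h => h.2 _ (Finset.mem_union_left _ hi0) (Finset.mem_union_left _ hi0)),
      zero_mul] at h
    exact one_ne_zero h
  have hnd12 : ¬ psm n (L ∪ σ₁) τ₁ ∣ psm n σ₂ (L ∪ τ₂) := by
    rintro ⟨c, hc⟩
    have h := congrArg (eval (fun i => if i ∈ σ₂ then (1 : ZMod 2) else 0)) hc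
    rw [map_mul, eval_psm, eval_psm,
      if_pos ⟨subset_rfl, fun i hi => Finset.disjoint_right.mp d2 hi⟩,
      if_neg (fun h => hi0σ₂ (h.1 (Finset.mem_union_left _ hi0))),
      zero_mul] at h
    exact one_ne_zero h
  rw [hf1, hf2]
  ext f
  simp only [CF, Set.mem_setOf_eq, Set.mem_insert_iff, Set.mem_singleton_iff]
  constructor
  · rintro ⟨⟨σ, τ, hd, rfl⟩, hfJ, hmin⟩
    rcases main_dvd L σ₁ τ₁ σ₂ τ₂ hL2 hshare σ τ hd hfJ with h | h
    · by_cases he : psm n (L ∪ σ₁) τ₁ = psm n σ τ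
      · exact Or.inl he.symm
      · exact absurd (Ideal.subset_span (Set.mem_insert _ _))
          (hmin _ ⟨_, _, d1, rfl⟩ h he)
    · by_cases he : psm n σ₂ (L ∪ τ₂) = psm n σ τ
      · exact Or.inr he.symm
      · refine absurd (Ideal.subset_span ?_) (hmin _ ⟨_, _, d2, rfl⟩ h he)
        exact Set.mem_insert_of_mem _ rfl
  · rintro (rfl | rfl)
    · refine ⟨⟨_, _, d1, rfl⟩, Ideal.subset_span (Set.mem_insert _ _), ?_⟩
      rintro g ⟨σ'', τ'', hd'', rfl⟩ hgdvd hgne hgJ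
      rcases main_dvd L σ₁ τ₁ σ₂ τ₂ hL2 hshare σ'' τ'' hd'' hgJ with h | h
      · exact hgne (psm_inj hd'' d1 hgdvd h)
      · exact hnd21 (h.trans hgdvd)
    · refine ⟨⟨_, _, d2, rfl⟩, Ideal.subset_span (Set.mem_insert_of_mem _ rfl), ?_⟩
      rintro g ⟨σ'', τ'', hd'', rfl⟩ hgdvd hgne hgJ
      rcases main_dvd L σ₁ τ₁ σ₂ τ₂ hL2 hshare σ'' τ'' hd'' hgJ with h | h
      · exact hnd12 (h.trans hgdvd)
      · exact hgne (psm_inj hd'' d2 hgdvd h)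
end

section
/- Let t, s > 0 with t+s ≤ n, and let g₁ = ∏_{i∈σ₁}xᵢ·∏_{i∈τ₁}(1−xᵢ) and g₂ = ∏_{i∈σ₂}xᵢ·∏_{i∈τ₂}(1−xᵢ) be pseudomonomials with σ₁, τ₁, σ₂, τ₂ ⊆ {t+s+1,…,n}, such that g₁ and g₂ share no index. Let J be the ideal of R generated by x₁⋯x_t·(1−x_{t+1})⋯(1−x_{t+s})·g₁ and x_{t+1}⋯x_{t+s}·(1−x₁)⋯(1−x_t)·g₂. Then CF(J) equals the set consisting of these two generators; that is, this presentation of J is in canonical form. -/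
open MvPolynomial

lemma eval_psm_s4 {n : ℕ} (σ τ : Finset (Fin n)) (p : Fin n → ZMod 2) :
    eval p (psm n σ τ) = (∏ i ∈ σ, p i) * ∏ i ∈ τ, (1 - p i) := by
  simp [psm]

lemma eval_psm_one {n : ℕ} {σ τ : Finset (Fin n)} {p : Fin n → ZMod 2}
    (h1 : ∀ i ∈ σ, p i = 1) (h0 : ∀ i ∈ τ, p i = 0) : eval p (psm n σ τ) = 1 := by
  rw [eval_psm_s4, Finset.prod_eq_one h1, Finset.prod_eq_one (fun i hi => by rw [h0 i hi, sub_zero]),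
    one_mul]

lemma eval_psm_zero_left {n : ℕ} {σ τ : Finset (Fin n)} {p : Fin n → ZMod 2} {i : Fin n}
    (hi : i ∈ σ) (h : p i = 0) : eval p (psm n σ τ) = 0 := by
  rw [eval_psm_s4, Finset.prod_eq_zero hi h, zero_mul]

lemma eval_psm_zero_right {n : ℕ} {σ τ : Finset (Fin n)} {p : Fin n → ZMod 2} {i : Fin n}
    (hi : i ∈ τ) (h : p i = 1) : eval p (psm n σ τ) = 0 := by
  rw [eval_psm_s4, Finset.prod_eq_zero hi (by rw [h, sub_self]), mul_zero]

lemma psm_dvd_psm {n : ℕ} {ρ κ S T : Finset (Fin n)} (hσ : ρ ⊆ S) (hτ : κ ⊆ T) :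
    psm n ρ κ ∣ psm n S T :=
  mul_dvd_mul (Finset.prod_dvd_prod_of_subset _ _ _ hσ) (Finset.prod_dvd_prod_of_subset _ _ _ hτ)

lemma dvd_psm {n : ℕ} {ρ κ S T : Finset (Fin n)} (hST : Disjoint S T)
    (h : psm n ρ κ ∣ psm n S T) : ρ ⊆ S ∧ κ ⊆ T := by
  obtain ⟨c, hc⟩ := h
  have key : ∀ p : Fin n → ZMod 2, eval p (psm n S T) = 1 → eval p (psm n ρ κ) = 1 := by
    intro p hp
    rw [hc, map_mul] at hp
    have h2 : ∀ a b : ZMod 2, a * b = 1 → a = 1 := by decide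
    exact h2 _ _ hp
  constructor
  · intro i hi
    by_contra hiS
    have h1 := key (fun j => if j ∈ S then 1 else 0)
      (eval_psm_one (fun j hj => by simp [hj])
        (fun j hj => by simp [Finset.disjoint_right.mp hST hj]))
    have h0 : eval (fun j => if j ∈ S then (1 : ZMod 2) else 0) (psm n ρ κ) = 0 :=
      eval_psm_zero_left hi (by simp [hiS])
    rw [h0] at h1
    exact absurd h1 (by decide)
  · intro i hi
    by_contra hiT
    have h1 := key (fun j => if j ∈ T then 0 else 1)
      (eval_psm_one (fun j hj => by simp [Finset.disjoint_left.mp hST hj])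
        (fun j hj => by simp [hj]))
    have h0 : eval (fun j => if j ∈ T then (0 : ZMod 2) else 1) (psm n ρ κ) = 0 :=
      eval_psm_zero_right hi (by simp [hiT])
    rw [h0] at h1
    exact absurd h1 (by decide)

lemma claim_aux {n : ℕ} (A B σ₁ τ₁ σ₂ τ₂ : Finset (Fin n))
    (hAne : A.Nonempty) (hBne : B.Nonempty)
    (ρ κ : Finset (Fin n)) (hρκ : Disjoint ρ κ)
    (hmem : psm n ρ κ ∈ Ideal.span {psm n (A ∪ σ₁) (B ∪ τ₁), psm n (B ∪ σ₂) (A ∪ τ₂)}) :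
    psm n (A ∪ σ₁) (B ∪ τ₁) ∣ psm n ρ κ ∨ psm n (B ∪ σ₂) (A ∪ τ₂) ∣ psm n ρ κ := by
  by_cases hc1 : A ∪ σ₁ ⊆ ρ ∧ B ∪ τ₁ ⊆ κ
  · exact Or.inl (psm_dvd_psm hc1.1 hc1.2)
  by_cases hc2 : B ∪ σ₂ ⊆ ρ ∧ A ∪ τ₂ ⊆ κ
  · exact Or.inr (psm_dvd_psm hc2.1 hc2.2)
  exfalso
  set W1 : Fin n → ZMod 2 → Prop :=
    fun j δ => (j ∈ A ∪ σ₁ ∧ δ = 0 ∧ j ∉ ρ) ∨ (j ∈ B ∪ τ₁ ∧ δ = 1 ∧ j ∉ κ) with hW1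
  set W2 : Fin n → ZMod 2 → Prop :=
    fun j δ => (j ∈ B ∪ σ₂ ∧ δ = 0 ∧ j ∉ ρ) ∨ (j ∈ A ∪ τ₂ ∧ δ = 1 ∧ j ∉ κ) with hW2
  have ex1 : ∃ j δ, W1 j δ := by
    rw [not_and_or] at hc1
    rcases hc1 with h | h <;> obtain ⟨j, hj, hjn⟩ := Finset.not_subset.mp h
    · exact ⟨j, 0, Or.inl ⟨hj, rfl, hjn⟩⟩
    · exact ⟨j, 1, Or.inr ⟨hj, rfl, hjn⟩⟩
  have ex2 : ∃ j δ, W2 j δ := by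
    rw [not_and_or] at hc2
    rcases hc2 with h | h <;> obtain ⟨j, hj, hjn⟩ := Finset.not_subset.mp h
    · exact ⟨j, 0, Or.inl ⟨hj, rfl, hjn⟩⟩
    · exact ⟨j, 1, Or.inr ⟨hj, rfl, hjn⟩⟩
  have key : ∃ j₁ δ₁ j₂ δ₂, W1 j₁ δ₁ ∧ W2 j₂ δ₂ ∧ (j₁ = j₂ → δ₁ = δ₂) := by
    obtain ⟨j₁, δ₁, h1⟩ := ex1
    obtain ⟨j₂, δ₂, h2⟩ := ex2
    rcases h1 with ⟨hm1, rfl, hn1⟩ | ⟨hm1, rfl, hn1⟩ <;>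
      rcases h2 with ⟨hm2, rfl, hn2⟩ | ⟨hm2, rfl, hn2⟩
    · exact ⟨j₁, 0, j₂, 0, Or.inl ⟨hm1, rfl, hn1⟩, Or.inl ⟨hm2, rfl, hn2⟩, fun _ => rfl⟩
    · -- conflict L/R : use b ∈ B
      obtain ⟨b, hb⟩ := hBne
      by_cases hbκ : b ∈ κ
      · have hbρ : b ∉ ρ := Finset.disjoint_right.mp hρκ hbκ
        exact ⟨j₁, 0, b, 0, Or.inl ⟨hm1, rfl, hn1⟩,
          Or.inl ⟨Finset.mem_union_left _ hb, rfl, hbρ⟩, fun _ => rfl⟩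
      · exact ⟨b, 1, j₂, 1, Or.inr ⟨Finset.mem_union_left _ hb, rfl, hbκ⟩,
          Or.inr ⟨hm2, rfl, hn2⟩, fun _ => rfl⟩
    · -- conflict R/L : use a ∈ A
      obtain ⟨a, ha⟩ := hAne
      by_cases haκ : a ∈ κ
      · have haρ : a ∉ ρ := Finset.disjoint_right.mp hρκ haκ
        exact ⟨a, 0, j₂, 0, Or.inl ⟨Finset.mem_union_left _ ha, rfl, haρ⟩,
          Or.inl ⟨hm2, rfl, hn2⟩, fun _ => rfl⟩
      · exact ⟨j₁, 1, a, 1, Or.inr ⟨hm1, rfl, hn1⟩,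
          Or.inr ⟨Finset.mem_union_left _ ha, rfl, haκ⟩, fun _ => rfl⟩
    · exact ⟨j₁, 1, j₂, 1, Or.inr ⟨hm1, rfl, hn1⟩, Or.inr ⟨hm2, rfl, hn2⟩, fun _ => rfl⟩
  obtain ⟨j₁, δ₁, j₂, δ₂, h1, h2, hcons⟩ := key
  set p : Fin n → ZMod 2 :=
    fun i => if i ∈ ρ then 1 else if i = j₁ then δ₁ else if i = j₂ then δ₂ else 0 with hp
  have hpρ : ∀ i ∈ ρ, p i = 1 := fun i hi => by simp [hp, hi]
  have hpκ : ∀ i ∈ κ, p i = 0 := by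
    intro i hi
    have hiρ : i ∉ ρ := Finset.disjoint_right.mp hρκ hi
    by_cases e1 : i = j₁
    · subst e1
      rcases h1 with ⟨_, rfl, _⟩ | ⟨_, _, hn⟩
      · simp [hp, hiρ]
      · exact absurd hi hn
    · by_cases e2 : i = j₂
      · subst e2
        rcases h2 with ⟨_, rfl, _⟩ | ⟨_, _, hn⟩
        · simp [hp, hiρ, e1]
        · exact absurd hi hn
      · simp [hp, hiρ, e1, e2]
  have hpj₁ : p j₁ = δ₁ := by
    by_cases hρ1 : j₁ ∈ ρ
    · rcases h1 with ⟨_, _, hn⟩ | ⟨_, rfl, _⟩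
      · exact absurd hρ1 hn
      · simp [hp, hρ1]
    · simp [hp, hρ1]
  have hpj₂ : p j₂ = δ₂ := by
    by_cases hρ2 : j₂ ∈ ρ
    · rcases h2 with ⟨_, _, hn⟩ | ⟨_, rfl, _⟩
      · exact absurd hρ2 hn
      · simp [hp, hρ2]
    · by_cases e : j₂ = j₁
      · have hpe : p j₂ = δ₁ := by simp only [hp]; rw [if_neg hρ2, if_pos e]
        rw [hpe, hcons e.symm]
      · simp [hp, hρ2, e]
  have hF₁ : eval p (psm n (A ∪ σ₁) (B ∪ τ₁)) = 0 := by
    rcases h1 with ⟨hm, rfl, _⟩ | ⟨hm, rfl, _⟩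
    · exact eval_psm_zero_left hm hpj₁
    · exact eval_psm_zero_right hm hpj₁
  have hF₂ : eval p (psm n (B ∪ σ₂) (A ∪ τ₂)) = 0 := by
    rcases h2 with ⟨hm, rfl, _⟩ | ⟨hm, rfl, _⟩
    · exact eval_psm_zero_left hm hpj₂
    · exact eval_psm_zero_right hm hpj₂
  have hone : eval p (psm n ρ κ) = 1 := eval_psm_one hpρ hpκ
  rw [Ideal.mem_span_pair] at hmem
  obtain ⟨u, v, huv⟩ := hmem
  have := congrArg (eval p) huv
  rw [map_add, map_mul, map_mul, hF₁, hF₂, mul_zero, mul_zero, add_zero, hone] at this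
  exact absurd this (by decide)

lemma min_aux {n : ℕ} (A B σ₁ τ₁ σ₂ τ₂ : Finset (Fin n))
    (hAne : A.Nonempty) (hBne : B.Nonempty)
    (hd₁ : Disjoint (A ∪ σ₁) (B ∪ τ₁))
    (hwit : ∃ b, b ∈ B ∪ σ₂ ∧ b ∉ A ∪ σ₁) :
    ∀ g, IsPseudomonomial g → g ∣ psm n (A ∪ σ₁) (B ∪ τ₁) → g ≠ psm n (A ∪ σ₁) (B ∪ τ₁) →
      g ∉ Ideal.span {psm n (A ∪ σ₁) (B ∪ τ₁), psm n (B ∪ σ₂) (A ∪ τ₂)} := by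
  rintro g ⟨ρ, κ, hρκ, rfl⟩ hdvd hne hmem
  rcases claim_aux A B σ₁ τ₁ σ₂ τ₂ hAne hBne ρ κ hρκ hmem with h | h
  · obtain ⟨hρS, hκT⟩ := dvd_psm hd₁ hdvd
    obtain ⟨hSρ, hTκ⟩ := dvd_psm hρκ h
    exact hne (by rw [Finset.Subset.antisymm hρS hSρ, Finset.Subset.antisymm hκT hTκ])
  · obtain ⟨hsub, _⟩ := dvd_psm hd₁ (h.trans hdvd)
    obtain ⟨b, hb1, hb2⟩ := hwit
    exact hb2 (hsub hb1)

/-- Theorem 5.2(3): the ideal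
`(x₁⋯x_t(1-x_{t+1})⋯(1-x_{t+s})g₁, x_{t+1}⋯x_{t+s}(1-x₁)⋯(1-x_t)g₂)` with `t, s > 0` and
`g₁, g₂` supported on indices `> t+s` and sharing no index is in canonical form. -/
theorem stmt4 {n t s : ℕ} (hn : 0 < n) (ht : 0 < t) (hs : 0 < s) (htsn : t + s ≤ n)
    (σ₁ τ₁ σ₂ τ₂ : Finset (Fin n))
    (hd1 : Disjoint σ₁ τ₁) (hd2 : Disjoint σ₂ τ₂)
    (hhigh : ∀ i ∈ σ₁ ∪ τ₁ ∪ σ₂ ∪ τ₂, t + s ≤ (i : ℕ))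
    (hshare : ∀ i : Fin n, i ∉ (σ₁ ∩ τ₂) ∪ (σ₂ ∩ τ₁))
    (A B : Finset (Fin n))
    (hA : A = Finset.univ.filter (fun i : Fin n => (i : ℕ) < t))
    (hB : B = Finset.univ.filter (fun i : Fin n => t ≤ (i : ℕ) ∧ (i : ℕ) < t + s)) :
    CF (Ideal.span
        {(∏ i ∈ A, X i) * (∏ i ∈ B, (1 - X i)) * psm n σ₁ τ₁,
         (∏ i ∈ B, X i) * (∏ i ∈ A, (1 - X i)) * psm n σ₂ τ₂}) =
      {(∏ i ∈ A, X i) * (∏ i ∈ B, (1 - X i)) * psm n σ₁ τ₁,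
       (∏ i ∈ B, X i) * (∏ i ∈ A, (1 - X i)) * psm n σ₂ τ₂} := by
  have memA : ∀ i : Fin n, i ∈ A ↔ (i : ℕ) < t := fun i => by simp [hA]
  have memB : ∀ i : Fin n, i ∈ B ↔ t ≤ (i : ℕ) ∧ (i : ℕ) < t + s := fun i => by simp [hB]
  have hσ₁h : ∀ i ∈ σ₁, t + s ≤ (i : ℕ) := fun i hi => hhigh i (by simp [hi])
  have hτ₁h : ∀ i ∈ τ₁, t + s ≤ (i : ℕ) := fun i hi => hhigh i (by simp [hi])
  have hσ₂h : ∀ i ∈ σ₂, t + s ≤ (i : ℕ) := fun i hi => hhigh i (by simp [hi])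
  have hτ₂h : ∀ i ∈ τ₂, t + s ≤ (i : ℕ) := fun i hi => hhigh i (by simp [hi])
  have dAB : Disjoint A B := Finset.disjoint_left.mpr fun i hiA hiB => by
    rw [memA] at hiA; rw [memB] at hiB; omega
  have dA : ∀ u : Finset (Fin n), (∀ i ∈ u, t + s ≤ (i : ℕ)) → Disjoint A u := fun u hu =>
    Finset.disjoint_left.mpr fun i hiA hiu => by
      rw [memA] at hiA; have := hu i hiu; omega
  have dB : ∀ u : Finset (Fin n), (∀ i ∈ u, t + s ≤ (i : ℕ)) → Disjoint B u := fun u hu =>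
    Finset.disjoint_left.mpr fun i hiB hiu => by
      rw [memB] at hiB; have := hu i hiu; omega
  have dAσ₁ := dA σ₁ hσ₁h
  have dAτ₁ := dA τ₁ hτ₁h
  have dAσ₂ := dA σ₂ hσ₂h
  have dAτ₂ := dA τ₂ hτ₂h
  have dBσ₁ := dB σ₁ hσ₁h
  have dBτ₁ := dB τ₁ hτ₁h
  have dBσ₂ := dB σ₂ hσ₂h
  have dBτ₂ := dB τ₂ hτ₂h
  have hAne : A.Nonempty := ⟨⟨0, hn⟩, (memA ⟨0, hn⟩).mpr ht⟩
  have hBne : B.Nonempty := ⟨⟨t, by omega⟩, (memB ⟨t, by omega⟩).mpr (by simp only [Fin.val_mk]; omega)⟩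
  have e1 : (∏ i ∈ A, X i) * (∏ i ∈ B, (1 - X i)) * psm n σ₁ τ₁
      = psm n (A ∪ σ₁) (B ∪ τ₁) := by
    rw [psm, psm, Finset.prod_union dAσ₁, Finset.prod_union dBτ₁]; ring
  have e2 : (∏ i ∈ B, X i) * (∏ i ∈ A, (1 - X i)) * psm n σ₂ τ₂
      = psm n (B ∪ σ₂) (A ∪ τ₂) := by
    rw [psm, psm, Finset.prod_union dBσ₂, Finset.prod_union dAτ₂]; ring
  rw [e1, e2]
  have hd₁' : Disjoint (A ∪ σ₁) (B ∪ τ₁) :=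
    Finset.disjoint_union_left.mpr
      ⟨Finset.disjoint_union_right.mpr ⟨dAB, dAτ₁⟩,
       Finset.disjoint_union_right.mpr ⟨dBσ₁.symm, hd1⟩⟩
  have hd₂' : Disjoint (B ∪ σ₂) (A ∪ τ₂) :=
    Finset.disjoint_union_left.mpr
      ⟨Finset.disjoint_union_right.mpr ⟨dAB.symm, dBτ₂⟩,
       Finset.disjoint_union_right.mpr ⟨dAσ₂.symm, hd2⟩⟩
  have memF₁ : psm n (A ∪ σ₁) (B ∪ τ₁)
      ∈ Ideal.span {psm n (A ∪ σ₁) (B ∪ τ₁), psm n (B ∪ σ₂) (A ∪ τ₂)} :=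
    Ideal.subset_span (Set.mem_insert _ _)
  have memF₂ : psm n (B ∪ σ₂) (A ∪ τ₂)
      ∈ Ideal.span {psm n (A ∪ σ₁) (B ∪ τ₁), psm n (B ∪ σ₂) (A ∪ τ₂)} :=
    Ideal.subset_span (Set.mem_insert_iff.mpr (Or.inr rfl))
  have wit₁ : ∃ b, b ∈ B ∪ σ₂ ∧ b ∉ A ∪ σ₁ := by
    obtain ⟨b, hb⟩ := hBne
    exact ⟨b, Finset.mem_union_left _ hb, fun h => (Finset.mem_union.mp h).elim
      (Finset.disjoint_right.mp dAB hb) (Finset.disjoint_left.mp dBσ₁ hb)⟩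
  have wit₂ : ∃ a, a ∈ A ∪ σ₁ ∧ a ∉ B ∪ σ₂ := by
    obtain ⟨a, ha⟩ := hAne
    exact ⟨a, Finset.mem_union_left _ ha, fun h => (Finset.mem_union.mp h).elim
      (Finset.disjoint_left.mp dAB ha) (Finset.disjoint_left.mp dAσ₂ ha)⟩
  have min₁ := min_aux A B σ₁ τ₁ σ₂ τ₂ hAne hBne hd₁' wit₁
  have min₂ := min_aux B A σ₂ τ₂ σ₁ τ₁ hBne hAne hd₂' wit₂
  rw [show ({psm n (B ∪ σ₂) (A ∪ τ₂), psm n (A ∪ σ₁) (B ∪ τ₁)} :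
      Set (MvPolynomial (Fin n) (ZMod 2)))
    = {psm n (A ∪ σ₁) (B ∪ τ₁), psm n (B ∪ σ₂) (A ∪ τ₂)} from Set.pair_comm _ _] at min₂
  ext h
  simp only [CF, Set.mem_setOf_eq, Set.mem_insert_iff, Set.mem_singleton_iff]
  constructor
  · rintro ⟨⟨ρ, κ, hρκ, rfl⟩, hmem, hmin⟩
    rcases claim_aux A B σ₁ τ₁ σ₂ τ₂ hAne hBne ρ κ hρκ hmem with hdv | hdv
    · left
      by_contra hne
      exact hmin _ ⟨A ∪ σ₁, B ∪ τ₁, hd₁', rfl⟩ hdv (fun e => hne e.symm) memF₁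
    · right
      by_contra hne
      exact hmin _ ⟨B ∪ σ₂, A ∪ τ₂, hd₂', rfl⟩ hdv (fun e => hne e.symm) memF₂
  · rintro (rfl | rfl)
    · exact ⟨⟨A ∪ σ₁, B ∪ τ₁, hd₁', rfl⟩, memF₁, min₁⟩
    · exact ⟨⟨B ∪ σ₂, A ∪ τ₂, hd₂', rfl⟩, memF₂, min₂⟩
end
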